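/- For every real sequence y = (y_j)_{j∈ℕ}, the sequence x defined by x_k = Σ_{j=0}^{k} B_{kj} · y_j satisfies (P̂x)_n = y_n for all n; moreover, if a real sequence x satisfies (P̂x)_n = 0 for all n, then x = 0. Consequently the map x ↦ P̂x is a bijection from the set of all real sequences onto itself. -/

import Mathlib

open Finset Filter Topology

/-- The Pascal fractional difference matrix `P̂ = P̂(τ)`. -/
noncomputable def Phat (τ : ℝ) (n k : ℕ) : ℝ :=
  if k ≤ n then
    ∑ i ∈ Finset.Icc k n,
      (-1 : ℝ) ^ (i - k) * (n.choose (n - i)) * Real.Gamma (τ + 1) /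
        (((i - k).factorial : ℝ) * Real.Gamma (τ - i + k + 1))
  else 0

/-- The matrix `B = B(τ)` (the inverse of `P̂`). -/
noncomputable def Bmat (τ : ℝ) (n k : ℕ) : ℝ :=
  if k ≤ n then
    ∑ j ∈ Finset.Icc k n,
      (-1 : ℝ) ^ (n - k) * (j.choose (j - k)) * Real.Gamma (-τ + 1) /
        (((n - j).factorial : ℝ) * Real.Gamma (-τ - n + j + 1))
  else 0

/-- The `P̂`-transform of a sequence `x`: `(P̂x)_n = Σ_{k=0}^n P̂_{nk} x_k`. -/
noncomputable def PhatT (τ : ℝ) (x : ℕ → ℝ) (n : ℕ) : ℝ :=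
  ∑ k ∈ Finset.range (n + 1), Phat τ n k * x k

/-- The space `ℓ_p(P̂)`: sequences whose `P̂`-transform is in `ℓ_p`. -/
def lpPhatSet (τ p : ℝ) : Set (ℕ → ℝ) :=
  {x | Summable fun n => |PhatT τ x n| ^ p}

/-- The norm of `ℓ_p(P̂)`. -/
noncomputable def lpPhatNorm (τ p : ℝ) (x : ℕ → ℝ) : ℝ :=
  (∑' n, |PhatT τ x n| ^ p) ^ (1 / p)

noncomputable def gb (x : ℝ) (m : ℕ) : ℝ :=
  (∏ j ∈ Finset.range m, (x - j)) / m.factorial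

lemma gb_zero (x : ℝ) : gb x 0 = 1 := by simp [gb]

lemma gb_succ (x : ℝ) (m : ℕ) : gb x (m + 1) = gb x m * ((x - m) / (m + 1)) := by
  have h1 : ((m+1).factorial : ℝ) = (m.factorial : ℝ) * (m+1) := by
    rw [Nat.factorial_succ]; push_cast; ring
  rw [gb, gb, Finset.prod_range_succ, h1]
  have hm : (m.factorial : ℝ) ≠ 0 := Nat.cast_ne_zero.mpr (Nat.factorial_ne_zero m)
  field_simp

lemma gb_zero_left (m : ℕ) : gb 0 (m + 1) = 0 := by
  rw [gb]
  have h0 : (∏ j ∈ Finset.range (m+1), ((0:ℝ) - j)) = 0 := by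
    apply Finset.prod_eq_zero (Finset.mem_range.mpr (Nat.succ_pos m))
    simp
  rw [h0, zero_div]

lemma gb_nat (n a : ℕ) : gb (n : ℝ) a = (n.choose a : ℝ) := by
  induction a with
  | zero => simp [gb_zero]
  | succ a ih =>
    rw [gb_succ, ih]
    by_cases h : a ≤ n
    · have key : (n.choose (a+1)) * (a+1) = n.choose a * (n - a) := Nat.choose_succ_right_eq n a
      have hna : ((n - a : ℕ) : ℝ) = (n:ℝ) - a := by
        push_cast [Nat.cast_sub h]; ring
      have key' : ((n.choose (a+1) : ℝ)) * (a+1) = (n.choose a : ℝ) * ((n:ℝ) - a) := by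
        rw [← hna]; exact_mod_cast congrArg (Nat.cast : ℕ → ℝ) key
      have ha1 : ((a:ℝ) + 1) ≠ 0 := by positivity
      field_simp
      linarith [key']
    · push_neg at h
      rw [Nat.choose_eq_zero_of_lt h, Nat.choose_eq_zero_of_lt (by omega)]
      simp

open Polynomial in
noncomputable def pgb (m : ℕ) : Polynomial ℝ :=
  Polynomial.C ((m.factorial : ℝ)⁻¹) * ∏ j ∈ Finset.range m, (Polynomial.X - Polynomial.C (j : ℝ))

lemma pgb_eval (m : ℕ) (x : ℝ) : (pgb m).eval x = gb x m := by
  simp [pgb, gb, Polynomial.eval_prod, div_eq_inv_mul, mul_comm]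

lemma vandermonde_nat (s a b : ℕ) :
    ∑ k ∈ Finset.range (s + 1), gb (a : ℝ) k * gb (b : ℝ) (s - k) = gb ((a : ℝ) + b) s := by
  have h := Nat.add_choose_eq a b s
  rw [Finset.Nat.sum_antidiagonal_eq_sum_range_succ_mk] at h
  have : ((a : ℝ) + b) = ((a + b : ℕ) : ℝ) := by push_cast; ring
  rw [this, gb_nat]
  calc ∑ k ∈ Finset.range (s + 1), gb (a : ℝ) k * gb (b : ℝ) (s - k)
      = ∑ k ∈ Finset.range (s + 1), ((a.choose k : ℝ) * (b.choose (s - k) : ℝ)) := by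
        refine Finset.sum_congr rfl fun k _ => by rw [gb_nat, gb_nat]
    _ = (((a + b).choose s : ℕ) : ℝ) := by rw [h]; push_cast; ring

lemma vandermonde_real_nat (s b : ℕ) (x : ℝ) :
    ∑ k ∈ Finset.range (s + 1), gb x k * gb (b : ℝ) (s - k) = gb (x + b) s := by
  have hpoly : (∑ k ∈ Finset.range (s + 1), pgb k * Polynomial.C (gb (b : ℝ) (s - k)))
      = (pgb s).comp (Polynomial.X + Polynomial.C (b : ℝ)) := by
    apply Polynomial.eq_of_infinite_eval_eq
    refine Set.Infinite.mono ?_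
      (Set.infinite_range_of_injective (f := (Nat.cast : ℕ → ℝ)) Nat.cast_injective)
    rintro _ ⟨n, rfl⟩
    simp only [Set.mem_setOf_eq, Polynomial.eval_finset_sum, Polynomial.eval_mul,
        Polynomial.eval_C, Polynomial.eval_comp, Polynomial.eval_add, Polynomial.eval_X,
        pgb_eval]
    rw [vandermonde_nat s n b]
  have := congrArg (Polynomial.eval x) hpoly
  simpa only [Polynomial.eval_finset_sum, Polynomial.eval_mul, Polynomial.eval_C,
    Polynomial.eval_comp, Polynomial.eval_add, Polynomial.eval_X, pgb_eval] using this

lemma vandermonde_real (s : ℕ) (x y : ℝ) :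
    ∑ k ∈ Finset.range (s + 1), gb x k * gb y (s - k) = gb (x + y) s := by
  have hpoly : (∑ k ∈ Finset.range (s + 1), Polynomial.C (gb x k) * pgb (s - k))
      = (pgb s).comp (Polynomial.X + Polynomial.C x) := by
    apply Polynomial.eq_of_infinite_eval_eq
    refine Set.Infinite.mono ?_
      (Set.infinite_range_of_injective (f := (Nat.cast : ℕ → ℝ)) Nat.cast_injective)
    rintro _ ⟨n, rfl⟩
    simp only [Set.mem_setOf_eq, Polynomial.eval_finset_sum, Polynomial.eval_mul,
        Polynomial.eval_C, Polynomial.eval_comp, Polynomial.eval_add, Polynomial.eval_X,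
        pgb_eval]
    rw [vandermonde_real_nat s n x, add_comm ((n : ℝ)) x]
  have := congrArg (Polynomial.eval y) hpoly
  simp only [Polynomial.eval_finset_sum, Polynomial.eval_mul, Polynomial.eval_C,
    Polynomial.eval_comp, Polynomial.eval_add, Polynomial.eval_X, pgb_eval] at this
  rw [this, add_comm y x]

lemma vandermonde_zero (s : ℕ) (x : ℝ) :
    ∑ k ∈ Finset.range (s + 1), gb x k * gb (-x) (s - k) = if s = 0 then 1 else 0 := by
  rw [vandermonde_real, add_neg_cancel]
  cases s with
  | zero => simp [gb_zero]
  | succ m => simp [gb_zero_left]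

lemma not_int_ne (x : ℝ) (hx : ∀ z : ℤ, x ≠ (z : ℝ)) (m : ℕ) (c : ℝ) (hc : ∃ z : ℤ, c = z) :
    x + c ≠ -(m : ℝ) := by
  obtain ⟨z, rfl⟩ := hc
  intro h
  exact hx (-m - z) (by push_cast; linarith)

lemma gamma_arg_ne_zero (x : ℝ) (hx : ∀ z : ℤ, x ≠ (z : ℝ)) (m : ℕ) :
    Real.Gamma (x - m + 1) ≠ 0 := by
  apply Real.Gamma_ne_zero
  intro j
  have := hx ((m : ℤ) - 1 - j)
  intro h
  apply this
  push_cast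
  linarith

lemma gamma_ratio (x : ℝ) (hx : ∀ z : ℤ, x ≠ (z : ℝ)) (m : ℕ) :
    Real.Gamma (x + 1) / ((m.factorial : ℝ) * Real.Gamma (x - m + 1)) = gb x m := by
  induction m with
  | zero =>
    have h0 : Real.Gamma (x - (0:ℕ) + 1) ≠ 0 := gamma_arg_ne_zero x hx 0
    simp only [Nat.cast_zero, sub_zero] at h0 ⊢
    rw [Nat.factorial_zero, Nat.cast_one, one_mul, div_self h0, gb_zero]
  | succ m ih =>
    have hne : x - m ≠ 0 := by
      intro h
      exact hx m (by push_cast; linarith)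
    have hrec : Real.Gamma (x - m + 1) = (x - m) * Real.Gamma (x - m) := Real.Gamma_add_one hne
    have hGm : Real.Gamma (x - m + 1) ≠ 0 := gamma_arg_ne_zero x hx m
    have hGm' : Real.Gamma (x - (m+1:ℕ) + 1) ≠ 0 := gamma_arg_ne_zero x hx (m+1)
    have harg : x - ((m+1:ℕ) : ℝ) + 1 = x - m := by push_cast; ring
    have hfact : ((m+1).factorial : ℝ) = (m.factorial : ℝ) * ((m:ℝ) + 1) := by
      rw [Nat.factorial_succ]; push_cast; ring
    have hΓ : Real.Gamma (x - ↑m) = Real.Gamma (x - ↑m + 1) / (x - ↑m) := by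
      rw [hrec, mul_div_cancel_left₀ _ hne]
    have hmf : (m.factorial : ℝ) ≠ 0 := Nat.cast_ne_zero.mpr (Nat.factorial_ne_zero m)
    have hm1 : ((m:ℝ) + 1) ≠ 0 := by positivity
    have key : Real.Gamma (x+1) / ((↑m.factorial * ((m:ℝ)+1)) * (Real.Gamma (x - ↑m + 1)/(x - ↑m)))
        = (Real.Gamma (x+1) / (↑m.factorial * Real.Gamma (x - ↑m + 1))) * ((x - ↑m)/((m:ℝ)+1)) := by
      simp only [div_eq_mul_inv, mul_inv, inv_inv]
      ring
    rw [harg, hΓ, hfact, key, ih, gb_succ]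

noncomputable def Pm (n i : ℕ) : ℝ := if i ≤ n then (n.choose i : ℝ) else 0
noncomputable def Dm (t : ℝ) (n k : ℕ) : ℝ := if k ≤ n then (-1:ℝ)^(n-k) * gb t (n-k) else 0
noncomputable def Pim (j k : ℕ) : ℝ := if k ≤ j then (-1:ℝ)^(j-k) * (j.choose k : ℝ) else 0

lemma Phat_eq (τ : ℝ) (hτ : ∀ z : ℤ, τ ≠ (z : ℝ)) (n k : ℕ) :
    Phat τ n k = ∑ i ∈ Finset.range (n+1), Pm n i * Dm τ i k := by
  have hsub : Finset.Icc k n ⊆ Finset.range (n+1) := by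
    intro i hi; rw [Finset.mem_Icc] at hi; rw [Finset.mem_range]; omega
  have hvan : ∀ i ∈ Finset.range (n+1), i ∉ Finset.Icc k n → Pm n i * Dm τ i k = 0 := by
    intro i hir hni
    rw [Finset.mem_range] at hir; rw [Finset.mem_Icc] at hni
    have : ¬ k ≤ i := by omega
    simp [Dm, this]
  by_cases hk : k ≤ n
  · rw [Phat, if_pos hk, ← Finset.sum_subset hsub hvan]
    apply Finset.sum_congr rfl
    intro i hi
    obtain ⟨hki, hin⟩ := Finset.mem_Icc.mp hi
    have hcast : τ - (i:ℝ) + (k:ℝ) + 1 = τ - ((i - k : ℕ) : ℝ) + 1 := by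
      rw [Nat.cast_sub hki]; ring
    rw [hcast, mul_div_assoc, gamma_ratio τ hτ (i - k), Nat.choose_symm hin]
    rw [Pm, Dm, if_pos hin, if_pos hki]
    ring
  · rw [Phat, if_neg hk]
    refine (Finset.sum_eq_zero ?_).symm
    intro i hi
    rw [Finset.mem_range] at hi
    have : ¬ k ≤ i := by omega
    simp [Dm, this]

lemma Bmat_eq (τ : ℝ) (hτ : ∀ z : ℤ, τ ≠ (z : ℝ)) (n k : ℕ) :
    Bmat τ n k = ∑ l ∈ Finset.range (n+1), Dm (-τ) n l * Pim l k := by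
  have hτ' : ∀ z : ℤ, -τ ≠ (z : ℝ) := by
    intro z h; exact hτ (-z) (by push_cast; linarith)
  have hsub : Finset.Icc k n ⊆ Finset.range (n+1) := by
    intro i hi; rw [Finset.mem_Icc] at hi; rw [Finset.mem_range]; omega
  have hvan : ∀ l ∈ Finset.range (n+1), l ∉ Finset.Icc k n → Dm (-τ) n l * Pim l k = 0 := by
    intro l hlr hnl
    rw [Finset.mem_range] at hlr; rw [Finset.mem_Icc] at hnl
    have : ¬ k ≤ l := by omega
    simp [Pim, this]
  by_cases hk : k ≤ n
  · rw [Bmat, if_pos hk, ← Finset.sum_subset hsub hvan]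
    apply Finset.sum_congr rfl
    intro j hj
    obtain ⟨hkj, hjn⟩ := Finset.mem_Icc.mp hj
    have hcast : -τ - (n:ℝ) + (j:ℝ) + 1 = -τ - ((n - j : ℕ) : ℝ) + 1 := by
      rw [Nat.cast_sub hjn]; ring
    rw [hcast, mul_div_assoc, gamma_ratio (-τ) hτ' (n - j), Nat.choose_symm hkj]
    rw [Dm, Pim, if_pos hjn, if_pos hkj]
    have hsgn : ((-1:ℝ))^(n-k) = ((-1:ℝ))^(n-j) * ((-1:ℝ))^(j-k) := by
      rw [← pow_add]
      congr 1
      omega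
    rw [hsgn]
    ring
  · rw [Bmat, if_neg hk]
    refine (Finset.sum_eq_zero ?_).symm
    intro l hl
    rw [Finset.mem_range] at hl
    have : ¬ k ≤ l := by omega
    simp [Pim, this]

lemma DDinv (τ : ℝ) (N n k : ℕ) (hn : n ≤ N) :
    ∑ m ∈ Finset.range (N+1), Dm τ n m * Dm (-τ) m k = if n = k then 1 else 0 := by
  by_cases hk : k ≤ n
  · have hsub : Finset.Icc k n ⊆ Finset.range (N+1) := by
      intro i hi; rw [Finset.mem_Icc] at hi; rw [Finset.mem_range]; omega
    have hvan : ∀ m ∈ Finset.range (N+1), m ∉ Finset.Icc k n → Dm τ n m * Dm (-τ) m k = 0 := by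
      intro m _ hm
      rw [Finset.mem_Icc] at hm
      by_cases h1 : m ≤ n
      · have : ¬ k ≤ m := by omega
        simp [Dm, this]
      · simp [Dm, h1]
    rw [← Finset.sum_subset hsub hvan]
    have hIco : Finset.Icc k n = Finset.Ico k (n+1) := (Finset.Ico_add_one_right_eq_Icc k n).symm
    rw [hIco, Finset.sum_Ico_eq_sum_range]
    have hnk : n + 1 - k = (n - k) + 1 := by omega
    rw [hnk]
    have hterm : ∀ a ∈ Finset.range ((n-k)+1),
        Dm τ n (k + a) * Dm (-τ) (k + a) k
          = (-1:ℝ)^(n-k) * (gb (-τ) a * gb τ ((n-k) - a)) := by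
      intro a ha
      rw [Finset.mem_range] at ha
      have h1 : k + a ≤ n := by omega
      have h2 : k ≤ k + a := by omega
      rw [Dm, Dm, if_pos h1, if_pos h2]
      have e1 : k + a - k = a := by omega
      have e2 : n - (k + a) = (n - k) - a := by omega
      rw [e1, e2]
      have hsgn : ((-1:ℝ))^((n-k)-a) * ((-1:ℝ))^a = ((-1:ℝ))^(n-k) := by
        rw [← pow_add]; congr 1; omega
      calc (-1:ℝ)^((n-k)-a) * gb τ ((n-k)-a) * ((-1:ℝ)^a * gb (-τ) a)
          = ((-1:ℝ)^((n-k)-a) * (-1:ℝ)^a) * (gb (-τ) a * gb τ ((n-k) - a)) := by ring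
        _ = (-1:ℝ)^(n-k) * (gb (-τ) a * gb τ ((n-k) - a)) := by rw [hsgn]
    rw [Finset.sum_congr rfl hterm, ← Finset.mul_sum]
    have hv : ∑ a ∈ Finset.range ((n-k)+1), gb (-τ) a * gb τ ((n-k) - a)
        = if n - k = 0 then 1 else 0 := by
      have := vandermonde_zero (n-k) (-τ)
      simpa [neg_neg] using this
    rw [hv]
    by_cases h : n = k
    · simp [h]
    · have : ¬ (n - k = 0) := by omega
      simp [h, this]
  · have h0 : ∀ m ∈ Finset.range (N+1), Dm τ n m * Dm (-τ) m k = 0 := by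
      intro m _
      by_cases h1 : m ≤ n
      · have : ¬ k ≤ m := by omega
        simp [Dm, this]
      · simp [Dm, h1]
    rw [Finset.sum_eq_zero h0]
    have : n ≠ k := by omega
    simp [this]

lemma alt_sum_real (s : ℕ) :
    ∑ i ∈ Finset.range (s+1), (-1:ℝ)^i * (s.choose i : ℝ) = if s = 0 then 1 else 0 := by
  have h := Int.alternating_sum_range_choose (n := s)
  have h2 := congrArg (fun z : ℤ => (z : ℝ)) h
  push_cast at h2
  rw [h2]

lemma PPinv (N n k : ℕ) (hn : n ≤ N) :
    ∑ m ∈ Finset.range (N+1), Pm n m * Pim m k = if n = k then 1 else 0 := by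
  by_cases hk : k ≤ n
  · have hsub : Finset.Icc k n ⊆ Finset.range (N+1) := by
      intro i hi; rw [Finset.mem_Icc] at hi; rw [Finset.mem_range]; omega
    have hvan : ∀ m ∈ Finset.range (N+1), m ∉ Finset.Icc k n → Pm n m * Pim m k = 0 := by
      intro m _ hm
      rw [Finset.mem_Icc] at hm
      by_cases h1 : m ≤ n
      · have : ¬ k ≤ m := by omega
        simp [Pim, this]
      · simp [Pm, h1]
    rw [← Finset.sum_subset hsub hvan]
    have hIco : Finset.Icc k n = Finset.Ico k (n+1) := (Finset.Ico_add_one_right_eq_Icc k n).symm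
    rw [hIco, Finset.sum_Ico_eq_sum_range]
    have hnk : n + 1 - k = (n - k) + 1 := by omega
    rw [hnk]
    have hterm : ∀ a ∈ Finset.range ((n-k)+1),
        Pm n (k + a) * Pim (k + a) k
          = (n.choose k : ℝ) * ((-1:ℝ)^a * ((n-k).choose a : ℝ)) := by
      intro a ha
      rw [Finset.mem_range] at ha
      have h1 : k + a ≤ n := by omega
      have h2 : k ≤ k + a := by omega
      rw [Pm, Pim, if_pos h1, if_pos h2]
      have e1 : k + a - k = a := by omega
      have hmul : n.choose (k+a) * (k+a).choose k = n.choose k * (n - k).choose a := by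
        have := Nat.choose_mul (n := n) h2
        rwa [e1] at this
      have hmulR : (n.choose (k+a) : ℝ) * ((k+a).choose k : ℝ)
          = (n.choose k : ℝ) * ((n - k).choose a : ℝ) := by exact_mod_cast hmul
      rw [e1]
      calc (n.choose (k+a) : ℝ) * ((-1:ℝ)^a * ((k+a).choose k : ℝ))
          = ((n.choose (k+a) : ℝ) * ((k+a).choose k : ℝ)) * (-1:ℝ)^a := by ring
        _ = ((n.choose k : ℝ) * ((n - k).choose a : ℝ)) * (-1:ℝ)^a := by rw [hmulR]
        _ = (n.choose k : ℝ) * ((-1:ℝ)^a * ((n-k).choose a : ℝ)) := by ring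
    rw [Finset.sum_congr rfl hterm, ← Finset.mul_sum, alt_sum_real (n-k)]
    by_cases h : n = k
    · simp [h]
    · have : ¬ (n - k = 0) := by omega
      simp [h, this]
  · have h0 : ∀ m ∈ Finset.range (N+1), Pm n m * Pim m k = 0 := by
      intro m _
      by_cases h1 : m ≤ n
      · have : ¬ k ≤ m := by omega
        simp [Pim, this]
      · simp [Pm, h1]
    rw [Finset.sum_eq_zero h0]
    have : n ≠ k := by omega
    simp [this]

lemma Bmat_zero (τ : ℝ) (k j : ℕ) (h : ¬ j ≤ k) : Bmat τ k j = 0 := by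
  rw [Bmat, if_neg h]

lemma key_inv (τ : ℝ) (hτ : ∀ z : ℤ, τ ≠ (z : ℝ)) (n j : ℕ) :
    ∑ k ∈ Finset.range (n+1), Phat τ n k * Bmat τ k j = if n = j then 1 else 0 := by
  have hB : ∀ k ∈ Finset.range (n+1),
      Bmat τ k j = ∑ l ∈ Finset.range (n+1), Dm (-τ) k l * Pim l j := by
    intro k hk
    rw [Finset.mem_range] at hk
    rw [Bmat_eq τ hτ]
    apply Finset.sum_subset
    · intro l hl; rw [Finset.mem_range] at hl ⊢; omega
    · intro l _ hl
      rw [Finset.mem_range] at hl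
      have : ¬ l ≤ k := by omega
      simp [Dm, this]
  calc ∑ k ∈ Finset.range (n+1), Phat τ n k * Bmat τ k j
      = ∑ k ∈ Finset.range (n+1), ∑ i ∈ Finset.range (n+1), ∑ l ∈ Finset.range (n+1),
          Pm n i * Dm τ i k * (Dm (-τ) k l * Pim l j) := by
        refine Finset.sum_congr rfl fun k hk => ?_
        rw [Phat_eq τ hτ, hB k hk, Finset.sum_mul_sum]
    _ = ∑ i ∈ Finset.range (n+1), ∑ l ∈ Finset.range (n+1),
          Pm n i * (∑ k ∈ Finset.range (n+1), Dm τ i k * Dm (-τ) k l) * Pim l j := by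
        rw [Finset.sum_comm]
        refine Finset.sum_congr rfl fun i _ => ?_
        rw [Finset.sum_comm]
        refine Finset.sum_congr rfl fun l _ => ?_
        rw [Finset.mul_sum, Finset.sum_mul]
        exact Finset.sum_congr rfl fun k _ => by ring
    _ = ∑ i ∈ Finset.range (n+1), ∑ l ∈ Finset.range (n+1),
          Pm n i * (if i = l then (1:ℝ) else 0) * Pim l j := by
        refine Finset.sum_congr rfl fun i hi => Finset.sum_congr rfl fun l _ => ?_
        rw [Finset.mem_range] at hi
        rw [DDinv τ n i l (by omega)]
    _ = ∑ i ∈ Finset.range (n+1), Pm n i * Pim i j := by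
        refine Finset.sum_congr rfl fun i hi => ?_
        have h1 : ∀ l ∈ Finset.range (n+1),
            Pm n i * (if i = l then (1:ℝ) else 0) * Pim l j
              = if i = l then Pm n i * Pim l j else 0 := by
          intro l _
          split <;> simp
        rw [Finset.sum_congr rfl h1, Finset.sum_ite_eq (Finset.range (n+1)) i
          (fun l => Pm n i * Pim l j), if_pos hi]
    _ = if n = j then 1 else 0 := PPinv n n j le_rfl

lemma Phat_diag (τ : ℝ) (hτ : ∀ z : ℤ, τ ≠ (z : ℝ)) (n : ℕ) : Phat τ n n = 1 := by
  rw [Phat_eq τ hτ]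
  rw [Finset.sum_eq_single n]
  · simp [Pm, Dm, gb_zero]
  · intro i hi hne
    rw [Finset.mem_range] at hi
    have : ¬ n ≤ i := by omega
    simp [Dm, this]
  · intro h
    exact absurd (Finset.mem_range.mpr (by omega)) h

/-- for any sequence `y`, the sequence `x_k = Σ_{j=0}^k B_{kj} y_j`
satisfies `P̂x = y`; if `P̂x = 0` then `x = 0`; hence `x ↦ P̂x` is a bijection on
the set of all real sequences. -/
theorem PhatT_bijective (τ : ℝ) (hτ : ∀ z : ℤ, τ ≠ (z : ℝ)) :
    (∀ y : ℕ → ℝ, ∀ n,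
      PhatT τ (fun k => ∑ j ∈ Finset.range (k + 1), Bmat τ k j * y j) n = y n) ∧
    (∀ x : ℕ → ℝ, (∀ n, PhatT τ x n = 0) → x = 0) ∧
    Function.Bijective (fun x : ℕ → ℝ => PhatT τ x) := by
  have part1 : ∀ y : ℕ → ℝ, ∀ n,
      PhatT τ (fun k => ∑ j ∈ Finset.range (k + 1), Bmat τ k j * y j) n = y n := by
    intro y n
    have hext : ∀ k ∈ Finset.range (n+1),
        (∑ j ∈ Finset.range (k + 1), Bmat τ k j * y j)
          = ∑ j ∈ Finset.range (n + 1), Bmat τ k j * y j := by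
      intro k hk
      rw [Finset.mem_range] at hk
      apply Finset.sum_subset
      · intro l hl; rw [Finset.mem_range] at hl ⊢; omega
      · intro l _ hl
        rw [Finset.mem_range] at hl
        rw [Bmat_zero τ k l (by omega), zero_mul]
    calc PhatT τ (fun k => ∑ j ∈ Finset.range (k + 1), Bmat τ k j * y j) n
        = ∑ k ∈ Finset.range (n+1), Phat τ n k *
            ∑ j ∈ Finset.range (n + 1), Bmat τ k j * y j := by
          rw [PhatT]
          exact Finset.sum_congr rfl fun k hk => by rw [hext k hk]
      _ = ∑ k ∈ Finset.range (n+1), ∑ j ∈ Finset.range (n + 1),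
            Phat τ n k * (Bmat τ k j * y j) := by
          exact Finset.sum_congr rfl fun k _ => Finset.mul_sum _ _ _
      _ = ∑ j ∈ Finset.range (n+1), ∑ k ∈ Finset.range (n + 1),
            Phat τ n k * (Bmat τ k j * y j) := Finset.sum_comm
      _ = ∑ j ∈ Finset.range (n+1),
            (∑ k ∈ Finset.range (n + 1), Phat τ n k * Bmat τ k j) * y j := by
          refine Finset.sum_congr rfl fun j _ => ?_
          rw [Finset.sum_mul]
          exact Finset.sum_congr rfl fun k _ => by ring
      _ = y n := by
          have h1 : ∀ j ∈ Finset.range (n+1),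
              (∑ k ∈ Finset.range (n + 1), Phat τ n k * Bmat τ k j) * y j
                = (if n = j then (1:ℝ) else 0) * y j := by
            intro j _
            rw [key_inv τ hτ n j]
          rw [Finset.sum_congr rfl h1]
          have h2 : ∀ j ∈ Finset.range (n+1),
              (if n = j then (1:ℝ) else 0) * y j = if n = j then y j else 0 := by
            intro j _; split <;> simp
          rw [Finset.sum_congr rfl h2,
            Finset.sum_ite_eq (Finset.range (n+1)) n y, if_pos (Finset.mem_range.mpr (by omega))]
  have part2 : ∀ x : ℕ → ℝ, (∀ n, PhatT τ x n = 0) → x = 0 := by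
    intro x hx
    funext n
    induction n using Nat.strong_induction_on with
    | _ n ih =>
      have h := hx n
      rw [PhatT, Finset.sum_range_succ, Phat_diag τ hτ, one_mul] at h
      have h0 : ∑ k ∈ Finset.range n, Phat τ n k * x k = 0 := by
        apply Finset.sum_eq_zero
        intro k hk
        rw [Finset.mem_range] at hk
        rw [ih k hk]
        simp
      rw [h0, zero_add] at h
      simpa using h
  refine ⟨part1, part2, ?_, ?_⟩
  · -- injective
    intro x y hxy
    have hz : ∀ n, PhatT τ (fun k => x k - y k) n = 0 := by
      intro n
      have : PhatT τ x n = PhatT τ y n := congrFun hxy n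
      simp only [PhatT, mul_sub] at *
      rw [Finset.sum_sub_distrib]
      simpa [PhatT] using sub_eq_zero_of_eq this
    have := part2 _ hz
    funext n
    have := congrFun this n
    simpa [sub_eq_zero] using this
  · -- surjective
    intro y
    exact ⟨fun k => ∑ j ∈ Finset.range (k + 1), Bmat τ k j * y j, funext (part1 y)⟩
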